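/- Let K₁, …, K_m ⊆ ℝⁿ be closed sets having linearly regular intersection at x̄ ∈ K = ∩ K_l. Then there exists δ > 0 such that for every x ∈ B(x̄, δ) ∩ K, the implication holds: Σ_{l=1}^m v_l = 0 with v_l ∈ N_{K_l}(x) implies v_l = 0 for all l. (Linearly regular intersection persists at all points of K near x̄.) -/

import Mathlib

/-!
Failure of linear regularity at `x` is witnessed by a zero-sum tuple of limiting normals
normalized to the unit sphere. Along a sequence of such failures at points `xₖ → x̄`, compactness
of the sphere gives a convergent subsequence of witnesses, and since the graph of the limiting
normal cone is closed, the limit is a witness of failure at `x̄`. So linear regularity is an open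
condition.
-/

open scoped RealInnerProductSpace
open Metric Filter

/-- The regular (Fréchet) normal cone of `C` at `x`. -/
def regNormalCone {n : ℕ} (C : Set (EuclideanSpace ℝ (Fin n)))
    (x : EuclideanSpace ℝ (Fin n)) : Set (EuclideanSpace ℝ (Fin n)) :=
  {v | ∀ ε > 0, ∃ δ > 0, ∀ y ∈ C, ‖y - x‖ < δ → ⟪v, y - x⟫ ≤ ε * ‖y - x‖}

/-- The limiting normal cone of `C` at `x`: limits of regular normals at points of `C`
converging to `x`. -/
def limNormalCone {n : ℕ} (C : Set (EuclideanSpace ℝ (Fin n)))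
    (x : EuclideanSpace ℝ (Fin n)) : Set (EuclideanSpace ℝ (Fin n)) :=
  {v | ∃ xs vs : ℕ → EuclideanSpace ℝ (Fin n), (∀ i, xs i ∈ C) ∧
    Tendsto xs atTop (nhds x) ∧ (∀ i, vs i ∈ regNormalCone C (xs i)) ∧
    Tendsto vs atTop (nhds v)}

def IsLinearlyRegularAt {n m : ℕ} (K : Fin m → Set (EuclideanSpace ℝ (Fin n)))
    (x : EuclideanSpace ℝ (Fin n)) : Prop :=
  ∀ v : Fin m → EuclideanSpace ℝ (Fin n),
    (∀ l, v l ∈ limNormalCone (K l) x) → (∑ l, v l) = 0 → ∀ l, v l = 0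

lemma tendsto_of_dist_lt_one_div_succ {α : Type*} [PseudoMetricSpace α] {x : α} {y z : ℕ → α}
    (hz : Tendsto z atTop (nhds x)) (hyz : ∀ i, dist (z i) (y i) < 1 / ((i : ℝ) + 1)) :
    Tendsto y atTop (nhds x) :=
  hz.congr_dist <| squeeze_zero (fun _ => dist_nonneg) (fun i => (hyz i).le)
    tendsto_one_div_add_atTop_nhds_zero_nat

section NormalCone

variable {n : ℕ} {C : Set (EuclideanSpace ℝ (Fin n))} {x v : EuclideanSpace ℝ (Fin n)}

lemma smul_mem_regNormalCone (hv : v ∈ regNormalCone C x) {c : ℝ} (hc : 0 < c) :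
    c • v ∈ regNormalCone C x := by
  intro ε hε
  obtain ⟨δ, hδ, h⟩ := hv (ε / c) (by positivity)
  refine ⟨δ, hδ, fun y hy hyx => ?_⟩
  calc ⟪c • v, y - x⟫ = c * ⟪v, y - x⟫ := real_inner_smul_left _ _ _
    _ ≤ c * (ε / c * ‖y - x‖) := mul_le_mul_of_nonneg_left (h y hy hyx) hc.le
    _ = ε * ‖y - x‖ := by field_simp

lemma smul_mem_limNormalCone (hv : v ∈ limNormalCone C x) {c : ℝ} (hc : 0 < c) :
    c • v ∈ limNormalCone C x := by
  obtain ⟨xs, vs, hxsC, hxs, hvs, hv⟩ := hv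
  exact ⟨xs, fun i => c • vs i, hxsC, hxs, fun i => smul_mem_regNormalCone (hvs i) hc,
    hv.const_smul c⟩

lemma mem_limNormalCone_of_tendsto {xs vs : ℕ → EuclideanSpace ℝ (Fin n)}
    (hvs : ∀ i, vs i ∈ limNormalCone C (xs i))
    (hx : Tendsto xs atTop (nhds x)) (hv : Tendsto vs atTop (nhds v)) :
    v ∈ limNormalCone C x := by
  have approx : ∀ i : ℕ, ∃ y w, y ∈ C ∧ dist (xs i) y < 1 / ((i : ℝ) + 1) ∧
      w ∈ regNormalCone C y ∧ dist (vs i) w < 1 / ((i : ℝ) + 1) := by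
    intro i
    obtain ⟨ys, ws, hysC, hys, hws, hwv⟩ := hvs i
    have hball : (0 : ℝ) < 1 / ((i : ℝ) + 1) := by positivity
    obtain ⟨j, hyj, hwj⟩ :=
      ((hys.eventually_mem (ball_mem_nhds _ hball)).and
        (hwv.eventually_mem (ball_mem_nhds _ hball))).exists
    exact ⟨ys j, ws j, hysC j, mem_ball'.mp hyj, hws j, mem_ball'.mp hwj⟩
  choose y w hyC hy hw hwv using approx
  exact ⟨y, w, hyC, tendsto_of_dist_lt_one_div_succ hx hy, hw,
    tendsto_of_dist_lt_one_div_succ hv hwv⟩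

end NormalCone

section LinearRegularity

variable {n m : ℕ} {K : Fin m → Set (EuclideanSpace ℝ (Fin n))} {x : EuclideanSpace ℝ (Fin n)}

lemma not_isLinearlyRegularAt_iff :
    ¬IsLinearlyRegularAt K x ↔ ∃ u ∈ sphere (0 : Fin m → EuclideanSpace ℝ (Fin n)) 1,
      (∀ l, u l ∈ limNormalCone (K l) x) ∧ (∑ l, u l) = 0 := by
  simp only [IsLinearlyRegularAt, not_forall, exists_prop]
  constructor
  · rintro ⟨v, hv, hsum, l, hl⟩
    have hnorm : 0 < ‖v‖ := norm_pos_iff.mpr fun h => hl (by simp [h])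
    refine ⟨‖v‖⁻¹ • v, ?_, fun l => smul_mem_limNormalCone (hv l) (inv_pos.mpr hnorm), ?_⟩
    · rw [mem_sphere_zero_iff_norm, norm_smul, norm_inv, norm_norm, inv_mul_cancel₀ hnorm.ne']
    · simp only [Pi.smul_apply, ← Finset.smul_sum, hsum, smul_zero]
  · rintro ⟨u, hu, hnormal, hsum⟩
    have hne : u ≠ 0 := ne_zero_of_mem_unit_sphere ⟨u, hu⟩
    obtain ⟨l, hl⟩ := Function.ne_iff.mp hne
    exact ⟨u, hnormal, hsum, l, hl⟩

lemma isClosed_setOf_not_isLinearlyRegularAt (K : Fin m → Set (EuclideanSpace ℝ (Fin n))) :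
    IsClosed {x | ¬IsLinearlyRegularAt K x} := by
  refine IsSeqClosed.isClosed fun {xs x} hxs hx => ?_
  simp only [Set.mem_ofPred_eq, not_isLinearlyRegularAt_iff] at hxs ⊢
  choose u hu hnormal hsum using hxs
  obtain ⟨ulim, hulim, φ, hφ, hconv⟩ := (isCompact_sphere _ _).tendsto_subseq hu
  refine ⟨ulim, hulim, fun l => ?_, ?_⟩
  · exact mem_limNormalCone_of_tendsto (fun k => hnormal (φ k) l)
      (hx.comp hφ.tendsto_atTop) (tendsto_pi_nhds.mp hconv l)
  · have hclosed : IsClosed {u : Fin m → EuclideanSpace ℝ (Fin n) | (∑ l, u l) = 0} :=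
      isClosed_eq (by fun_prop) continuous_const
    exact hclosed.mem_of_tendsto hconv (Eventually.of_forall fun k => hsum (φ k))

lemma isOpen_setOf_isLinearlyRegularAt (K : Fin m → Set (EuclideanSpace ℝ (Fin n))) :
    IsOpen {x | IsLinearlyRegularAt K x} := by
  simpa only [Set.compl_ofPred, not_not] using
    (isClosed_setOf_not_isLinearlyRegularAt K).isOpen_compl

end LinearRegularity

theorem linreg_persists_general {n m : ℕ}
    (K : Fin m → Set (EuclideanSpace ℝ (Fin n)))
    (xbar : EuclideanSpace ℝ (Fin n))
    (hlinreg : ∀ v : Fin m → EuclideanSpace ℝ (Fin n),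
      (∀ l, v l ∈ limNormalCone (K l) xbar) → (∑ l, v l) = 0 → ∀ l, v l = 0) :
    ∃ δ > 0, ∀ x ∈ closedBall xbar δ ∩ ⋂ l, K l,
      ∀ v : Fin m → EuclideanSpace ℝ (Fin n), (∀ l, v l ∈ limNormalCone (K l) x) →
        (∑ l, v l) = 0 → ∀ l, v l = 0 := by
  obtain ⟨δ, hδ, hball⟩ :=
    nhds_basis_closedBall.mem_iff.mp ((isOpen_setOf_isLinearlyRegularAt K).mem_nhds hlinreg)
  exact ⟨δ, hδ, fun x hx => hball hx.1⟩

/-- Linearly regular intersection persists at all points of the intersection near `x̄`. -/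
theorem linreg_persists {n m : ℕ}
    (K : Fin m → Set (EuclideanSpace ℝ (Fin n))) (hK : ∀ l, IsClosed (K l))
    (xbar : EuclideanSpace ℝ (Fin n)) (hxbar : xbar ∈ ⋂ l, K l)
    (hlinreg : ∀ v : Fin m → EuclideanSpace ℝ (Fin n),
      (∀ l, v l ∈ limNormalCone (K l) xbar) → (∑ l, v l) = 0 → ∀ l, v l = 0) :
    ∃ δ > 0, ∀ x ∈ closedBall xbar δ ∩ ⋂ l, K l,
      ∀ v : Fin m → EuclideanSpace ℝ (Fin n), (∀ l, v l ∈ limNormalCone (K l) x) →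
        (∑ l, v l) = 0 → ∀ l, v l = 0 :=
  linreg_persists_general K xbar hlinreg
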